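/- (Pairing lemma) Let T be a full binary tree whose leaves are labeled 0 or 1, with the root's subtree containing an even number of 1-leaves. Then the 1-labeled leaves can be partitioned into pairs, where each pair (w, u) corresponds to an internal node at which the pending token of w meets the pending token of u (i.e., an internal node both of whose children are active and whose distinguished leaves are w and u). -/
import Mathlib

/-- Full binary merge trees whose leaves are labeled with `Bool`. -/
inductive LTree : Type
  | leaf : Bool → LTree
  | node : LTree → LTree → LTree
deriving DecidableEq

/-- Number of `true`-labeled leaves in a tree. -/
def LTree.ones : LTree → ℕ
  | .leaf b => if b then 1 else 0
  | .node l r => l.ones + r.ones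

/-- A tree (token) is active iff it contains an odd number of 1-leaves. -/
def LTree.active (t : LTree) : Prop := t.ones % 2 = 1

/-- The subtree of `t` at address `p` (`false` = go left, `true` = go right). -/
def LTree.subtreeAt : LTree → List Bool → Option LTree
  | t, [] => some t
  | .node l _, false :: p => l.subtreeAt p
  | .node _ r, true :: p => r.subtreeAt p
  | .leaf _, _ :: _ => none

/-- `a` and `b` meet at an internal node of `t` with both children active. -/
def LMeets (t : LTree) (a b : List Bool) : Prop :=
  ∃ (q : List Bool) (l r : LTree),
    t.subtreeAt q = some (LTree.node l r) ∧ l.active ∧ r.active ∧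
    ((q ++ [false]) <+: a ∧ (q ++ [true]) <+: b ∨
     (q ++ [true]) <+: a ∧ (q ++ [false]) <+: b)

lemma LMeets.liftL {l : LTree} (r : LTree) {a b : List Bool}
    (h : LMeets l a b) : LMeets (.node l r) (false :: a) (false :: b) := by
  obtain ⟨q, x, y, hq, hx, hy, hpre⟩ := h
  refine ⟨false :: q, x, y, hq, hx, hy, ?_⟩
  rcases hpre with ⟨h1, h2⟩ | ⟨h1, h2⟩
  · exact Or.inl ⟨List.cons_prefix_cons.2 ⟨rfl, h1⟩, List.cons_prefix_cons.2 ⟨rfl, h2⟩⟩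
  · exact Or.inr ⟨List.cons_prefix_cons.2 ⟨rfl, h1⟩, List.cons_prefix_cons.2 ⟨rfl, h2⟩⟩

lemma LMeets.liftR (l : LTree) {r : LTree} {a b : List Bool}
    (h : LMeets r a b) : LMeets (.node l r) (true :: a) (true :: b) := by
  obtain ⟨q, x, y, hq, hx, hy, hpre⟩ := h
  refine ⟨true :: q, x, y, hq, hx, hy, ?_⟩
  rcases hpre with ⟨h1, h2⟩ | ⟨h1, h2⟩
  · exact Or.inl ⟨List.cons_prefix_cons.2 ⟨rfl, h1⟩, List.cons_prefix_cons.2 ⟨rfl, h2⟩⟩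
  · exact Or.inr ⟨List.cons_prefix_cons.2 ⟨rfl, h1⟩, List.cons_prefix_cons.2 ⟨rfl, h2⟩⟩

/-- Specification of a full matching on an even tree. -/
def ESpec (t : LTree) (m : List Bool → List Bool) : Prop :=
  ∀ a, t.subtreeAt a = some (LTree.leaf true) →
    t.subtreeAt (m a) = some (LTree.leaf true) ∧ m a ≠ a ∧ m (m a) = a ∧ LMeets t a (m a)

/-- Specification of a matching on an odd tree avoiding the pending leaf `p`. -/
def OSpec (t : LTree) (p : List Bool) (m : List Bool → List Bool) : Prop :=
  t.subtreeAt p = some (LTree.leaf true) ∧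
  ∀ a, t.subtreeAt a = some (LTree.leaf true) → a ≠ p →
    t.subtreeAt (m a) = some (LTree.leaf true) ∧ m a ≠ a ∧ m a ≠ p ∧
      m (m a) = a ∧ LMeets t a (m a)

def mlift (mL mR : List Bool → List Bool) : List Bool → List Bool
  | [] => []
  | false :: a' => false :: mL a'
  | true :: a' => true :: mR a'

@[simp] lemma mlift_false (mL mR : List Bool → List Bool) (a : List Bool) :
    mlift mL mR (false :: a) = false :: mL a := rfl

@[simp] lemma mlift_true (mL mR : List Bool → List Bool) (a : List Bool) :
    mlift mL mR (true :: a) = true :: mR a := rfl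

@[simp] lemma subtree_nodeF (l r : LTree) (a : List Bool) :
    (LTree.node l r).subtreeAt (false :: a) = l.subtreeAt a := rfl

@[simp] lemma subtree_nodeT (l r : LTree) (a : List Bool) :
    (LTree.node l r).subtreeAt (true :: a) = r.subtreeAt a := rfl

lemma leaf_addr {l r : LTree} {a : List Bool}
    (h : (LTree.node l r).subtreeAt a = some (LTree.leaf true)) :
    (∃ a', a = false :: a' ∧ l.subtreeAt a' = some (LTree.leaf true)) ∨
    (∃ a', a = true :: a' ∧ r.subtreeAt a' = some (LTree.leaf true)) := by
  match a with
  | [] => simp [LTree.subtreeAt] at h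
  | false :: a' => exact Or.inl ⟨a', rfl, h⟩
  | true :: a' => exact Or.inr ⟨a', rfl, h⟩

lemma main_lemma (t : LTree) :
    (t.ones % 2 = 0 → ∃ m, ESpec t m) ∧
    (t.ones % 2 = 1 → ∃ p m, OSpec t p m) := by
  induction t with
  | leaf b =>
    cases b with
    | false =>
      constructor
      · intro _
        refine ⟨id, fun a ha => ?_⟩
        cases a with
        | nil => simp [LTree.subtreeAt] at ha
        | cons x xs => simp [LTree.subtreeAt] at ha
      · intro h; simp [LTree.ones] at h
    | true =>
      constructor
      · intro h; simp [LTree.ones] at h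
      · intro _
        refine ⟨[], id, rfl, fun a ha hne => ?_⟩
        cases a with
        | nil => exact absurd rfl hne
        | cons x xs => simp [LTree.subtreeAt] at ha
  | node l r ihl ihr =>
    have hones : (LTree.node l r).ones = l.ones + r.ones := rfl
    constructor
    · -- even case
      intro heven
      rw [hones] at heven
      rcases Nat.mod_two_eq_zero_or_one l.ones with hl | hl
      · -- both even
        have hr : r.ones % 2 = 0 := by omega
        obtain ⟨mL, hL⟩ := ihl.1 hl
        obtain ⟨mR, hR⟩ := ihr.1 hr
        refine ⟨mlift mL mR, fun a ha => ?_⟩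
        rcases leaf_addr ha with ⟨a', rfl, ha'⟩ | ⟨a', rfl, ha'⟩
        · obtain ⟨h1, h2, h3, h4⟩ := hL a' ha'
          exact ⟨h1, by simp [h2], by simp [h3], h4.liftL r⟩
        · obtain ⟨h1, h2, h3, h4⟩ := hR a' ha'
          exact ⟨h1, by simp [h2], by simp [h3], h4.liftR l⟩
      · -- both odd
        have hr : r.ones % 2 = 1 := by omega
        obtain ⟨pL, mL, hpL, hL⟩ := ihl.2 hl
        obtain ⟨pR, mR, hpR, hR⟩ := ihr.2 hr
        classical
        set m : List Bool → List Bool := fun a =>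
          if a = false :: pL then true :: pR
          else if a = true :: pR then false :: pL
          else mlift mL mR a with hm
        have hmPL : m (false :: pL) = true :: pR := by simp [hm]
        have hmPR : m (true :: pR) = false :: pL := by simp [hm]
        refine ⟨m, fun a ha => ?_⟩
        by_cases haL : a = false :: pL
        · subst haL
          refine ⟨by rw [hmPL]; simpa using hpR, by simp [hmPL], by simp [hmPL, hmPR], ?_⟩
          exact ⟨[], l, r, rfl, hl, hr, Or.inl ⟨⟨pL, rfl⟩, by rw [hmPL]; exact ⟨pR, rfl⟩⟩⟩
        · by_cases haR : a = true :: pR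
          · subst haR
            refine ⟨by rw [hmPR]; simpa using hpL, by simp [hmPR], by simp [hmPL, hmPR], ?_⟩
            exact ⟨[], l, r, rfl, hl, hr, Or.inr ⟨⟨pR, rfl⟩, by rw [hmPR]; exact ⟨pL, rfl⟩⟩⟩
          · have hma : m a = mlift mL mR a := by simp [hm, haL, haR]
            rcases leaf_addr ha with ⟨a', rfl, ha'⟩ | ⟨a', rfl, ha'⟩
            · have ha'ne : a' ≠ pL := fun h => haL (by rw [h])
              obtain ⟨h1, h2, h3, h4, h5⟩ := hL a' ha' ha'ne
              have hma' : m (false :: a') = false :: mL a' := by rw [hma]; rfl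
              have hmm : m (false :: mL a') = false :: mL (mL a') := by
                have n1 : (false :: mL a' : List Bool) ≠ false :: pL := by simp [h3]
                simp [hm, n1]
              refine ⟨by rw [hma']; simpa using h1, by simp [hma', h2], ?_, ?_⟩
              · rw [hma', hmm, h4]
              · rw [hma']; exact h5.liftL r
            · have ha'ne : a' ≠ pR := fun h => haR (by rw [h])
              obtain ⟨h1, h2, h3, h4, h5⟩ := hR a' ha' ha'ne
              have hma' : m (true :: a') = true :: mR a' := by rw [hma]; rfl
              have hmm : m (true :: mR a') = true :: mR (mR a') := by
                have n1 : (true :: mR a' : List Bool) ≠ true :: pR := by simp [h3]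
                simp [hm, n1]
              refine ⟨by rw [hma']; simpa using h1, by simp [hma', h2], ?_, ?_⟩
              · rw [hma', hmm, h4]
              · rw [hma']; exact h5.liftR l
    · -- odd case
      intro hodd
      rw [hones] at hodd
      rcases Nat.mod_two_eq_zero_or_one l.ones with hl | hl
      · -- l even, r odd
        have hr : r.ones % 2 = 1 := by omega
        obtain ⟨mL, hL⟩ := ihl.1 hl
        obtain ⟨pR, mR, hpR, hR⟩ := ihr.2 hr
        refine ⟨true :: pR, mlift mL mR, by simpa using hpR, fun a ha hne => ?_⟩
        rcases leaf_addr ha with ⟨a', rfl, ha'⟩ | ⟨a', rfl, ha'⟩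
        · obtain ⟨h1, h2, h3, h4⟩ := hL a' ha'
          exact ⟨h1, by simp [h2], by simp, by simp [h3], h4.liftL r⟩
        · have ha'ne : a' ≠ pR := fun h => hne (by rw [h])
          obtain ⟨h1, h2, h3, h4, h5⟩ := hR a' ha' ha'ne
          exact ⟨h1, by simp [h2], by simp [h3], by simp [h4], h5.liftR l⟩
      · -- l odd, r even
        have hr : r.ones % 2 = 0 := by omega
        obtain ⟨pL, mL, hpL, hL⟩ := ihl.2 hl
        obtain ⟨mR, hR⟩ := ihr.1 hr
        refine ⟨false :: pL, mlift mL mR, by simpa using hpL, fun a ha hne => ?_⟩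
        rcases leaf_addr ha with ⟨a', rfl, ha'⟩ | ⟨a', rfl, ha'⟩
        · have ha'ne : a' ≠ pL := fun h => hne (by rw [h])
          obtain ⟨h1, h2, h3, h4, h5⟩ := hL a' ha' ha'ne
          exact ⟨h1, by simp [h2], by simp [h3], by simp [h4], h5.liftL r⟩
        · obtain ⟨h1, h2, h3, h4⟩ := hR a' ha'
          exact ⟨h1, by simp [h2], by simp, by simp [h3], h4.liftR l⟩

theorem pairing_lemma (t : LTree) (heven : t.ones % 2 = 0) :
    ∃ m : List Bool → List Bool,
      (∀ a, t.subtreeAt a = some (LTree.leaf true) →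
        t.subtreeAt (m a) = some (LTree.leaf true)) ∧
      (∀ a, t.subtreeAt a = some (LTree.leaf true) → m a ≠ a) ∧
      (∀ a, t.subtreeAt a = some (LTree.leaf true) → m (m a) = a) ∧
      (∀ a, t.subtreeAt a = some (LTree.leaf true) →
        ∃ (q : List Bool) (l r : LTree),
          t.subtreeAt q = some (LTree.node l r) ∧ l.active ∧ r.active ∧
          ((q ++ [false]) <+: a ∧ (q ++ [true]) <+: m a ∨
           (q ++ [true]) <+: a ∧ (q ++ [false]) <+: m a)) := by
  obtain ⟨m, hm⟩ := (main_lemma t).1 heven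
  exact ⟨m, fun a ha => (hm a ha).1, fun a ha => (hm a ha).2.1,
    fun a ha => (hm a ha).2.2.1, fun a ha => (hm a ha).2.2.2⟩
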